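/- Let Q be a strongly locally finite quiver and Σ a top-finite full subquiver of Q. Then Σ contains no left-infinite path, i.e. no path of the form ··· → x₂ → x₁ → x₀. -/
import Mathlib


open Quiver

universe u v

/-- The quiver is locally finite: each vertex meets only finitely many arrows. -/
def QuiverLocallyFinite (V : Type u) [Quiver.{v} V] : Prop :=
  (∀ x y : V, Finite (x ⟶ y)) ∧
    (∀ x : V, {y : V | Nonempty (x ⟶ y)}.Finite) ∧
    (∀ x : V, {y : V | Nonempty (y ⟶ x)}.Finite)

/-- The quiver is interval-finite: finitely many paths between any two vertices. -/
def IntervalFinite (V : Type u) [Quiver.{v} V] : Prop :=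
  ∀ x y : V, Finite (Quiver.Path x y)

/-- `y` is reachable from `x` by a path all of whose vertices lie in `S`. -/
def ReachIn {V : Type u} [Quiver.{v} V] (S : Set V) (x y : V) : Prop :=
  Relation.ReflTransGen (fun a b => a ∈ S ∧ b ∈ S ∧ Nonempty (a ⟶ b)) x y

/-- `x` is a source vertex of the full subquiver on `S`. -/
def IsSourceIn {V : Type u} [Quiver.{v} V] (S : Set V) (x : V) : Prop :=
  x ∈ S ∧ ∀ y ∈ S, IsEmpty (y ⟶ x)

/-- `x` is a sink vertex of the full subquiver on `S`. -/
def IsSinkIn {V : Type u} [Quiver.{v} V] (S : Set V) (x : V) : Prop :=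
  x ∈ S ∧ ∀ y ∈ S, IsEmpty (x ⟶ y)

/-- The full subquiver on `S` is top-finite: it has finitely many sources and every
vertex of `S` is a successor (within `S`) of one of them. -/
def TopFinite {V : Type u} [Quiver.{v} V] (S : Set V) : Prop :=
  {x | IsSourceIn S x}.Finite ∧ ∀ x ∈ S, ∃ s, IsSourceIn S s ∧ ReachIn S s x

/-- The full subquiver on `S` is socle-finite: it has finitely many sinks and every
vertex of `S` is a predecessor (within `S`) of one of them. -/
def SocleFinite {V : Type u} [Quiver.{v} V] (S : Set V) : Prop :=
  {x | IsSinkIn S x}.Finite ∧ ∀ x ∈ S, ∃ s, IsSinkIn S s ∧ ReachIn S x s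




lemma reachIn_nonempty_path {V : Type u} [Quiver.{v} V] {S : Set V} {x y : V}
    (h : ReachIn S x y) : Nonempty (Quiver.Path x y) := by
  induction h with
  | refl => exact ⟨Quiver.Path.nil⟩
  | tail _ step ih =>
    obtain ⟨p⟩ := ih
    obtain ⟨_, _, ⟨a⟩⟩ := step
    exact ⟨p.cons a⟩

/-- A top-finite full subquiver of a strongly locally finite quiver contains no
left-infinite path `⋯ → x₂ → x₁ → x₀`. -/
theorem topFinite_no_left_infinite_path {V : Type u} [Quiver.{v} V]
    (hlf : QuiverLocallyFinite V) (hif : IntervalFinite V)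
    (S : Set V) (htop : TopFinite S) :
    ¬ ∃ f : ℕ → V, (∀ n, f n ∈ S) ∧ ∀ n, Nonempty (f (n + 1) ⟶ f n) := by
  rintro ⟨f, hS, harr⟩
  -- paths of length n from f n to f 0
  have hpath : ∀ n : ℕ, ∃ p : Quiver.Path (f n) (f 0), n ≤ p.length := by
    intro n
    induction n with
    | zero => exact ⟨Quiver.Path.nil, le_refl _⟩
    | succ n ih =>
      obtain ⟨p, hp⟩ := ih
      obtain ⟨a⟩ := harr n
      refine ⟨(Quiver.Hom.toPath a).comp p, ?_⟩
      rw [Quiver.Path.length_comp]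
      simp [Quiver.Hom.toPath, Quiver.Path.length]
      omega
  -- choose sources
  have hsrc : ∀ n : ℕ, ∃ s, IsSourceIn S s ∧ ReachIn S s (f n) := fun n =>
    htop.2 (f n) (hS n)
  choose s hsrc1 hsrc2 using hsrc
  -- map to the finite set of sources
  haveI : Finite {x | IsSourceIn S x} := htop.1
  obtain ⟨⟨t, ht⟩, hinf⟩ :=
    Finite.exists_infinite_fiber (fun n => (⟨s n, hsrc1 n⟩ : {x | IsSourceIn S x}))
  have hinf' : {n : ℕ | s n = t}.Infinite := by
    rw [← Set.infinite_coe_iff]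
    refine Infinite.of_injective (fun m : (fun n => (⟨s n, hsrc1 n⟩ : {x | IsSourceIn S x})) ⁻¹' {⟨t, ht⟩} => (⟨m.1, by
      have := m.2
      simp only [Set.mem_preimage, Set.mem_singleton_iff, Subtype.ext_iff] at this
      exact this⟩ : {n : ℕ | s n = t})) ?_
    intro a b hab
    simpa [Subtype.ext_iff] using hab
  -- paths from t to f 0 of arbitrary length
  haveI := hif t (f 0)
  have hfin : (Set.range (Quiver.Path.length : Quiver.Path t (f 0) → ℕ)).Finite :=
    Set.finite_range _
  obtain ⟨N, hN⟩ := hfin.bddAbove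
  obtain ⟨n, hn, hnN⟩ := hinf'.exists_gt N
  obtain ⟨p, hp⟩ := hpath n
  obtain ⟨q⟩ := reachIn_nonempty_path (hn ▸ hsrc2 n)
  have : (q.comp p).length ∈ Set.range (Quiver.Path.length : Quiver.Path t (f 0) → ℕ) :=
    ⟨q.comp p, rfl⟩
  have hle := hN this
  rw [Quiver.Path.length_comp] at hle
  omega
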